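/- In the symmetric group S₄ with simple transpositions s₁,s₂,s₃, let v₁ = s₁s₂s₃ and v₂ = s₂s₁s₃, J₁ = {s₁}, J₂ = {s₂}. Then both lower Bruhat intervals [e,v₁] and [e,v₂] are isomorphic to the Boolean lattice B₃, |A^{J₁}_{e,v₁}| = |A^{J₂}_{e,v₂}| = 2, but P^{J₁,-1}_{e,v₁} = 1 while P^{J₂,-1}_{e,v₂} = 1 + q. -/

import Mathlib

/-!
The words `s₁s₂s₃` and `s₂s₁s₃` use every simple reflection exactly once, so their lower
Bruhat intervals are Boolean: each element below is the product of a unique subword, all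
subwords are reduced, and the order is inclusion of subwords, equivalently of the sets of simple
reflections below an element. In particular the atoms are the three simple reflections, two of
which are minimal in their cosets modulo `W_J`.

On such a word Deodhar's recursion for `R^{J,x}` can be run on subwords: the first letter `i`
of the upper subword is a left descent of the lower subword exactly when it is also its first
letter. The defining identity of `P^{J,x}` becomes a finite polynomial identity indexed by the
subwords lying in `Wᴶ`, and the degree bound `2 deg P + 1 ≤ ℓ v - ℓ u` lets one read `P` off
the low coefficients, from the top of the interval down. The facts specific to `S₄` (lengths,
non-reflections, membership in `Wᴶ`) are certified by computing in the permutation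
representation `W → Perm (Fin 4)`.
-/
open Polynomial

namespace KL

variable {B W : Type*} [Group W] {M : CoxeterMatrix B}

/-- Bruhat order on a Coxeter group: reflexive-transitive closure of right
multiplication by a reflection that increases length. -/
def BruhatLE (cs : CoxeterSystem M W) : W → W → Prop :=
  Relation.ReflTransGen (fun x y =>
    ∃ t, cs.IsReflection t ∧ y = x * t ∧ cs.length x < cs.length y)

def BruhatLT (cs : CoxeterSystem M W) (x y : W) : Prop :=
  BruhatLE cs x y ∧ x ≠ y

/-- Covering relation of Bruhat order. -/
def BruhatCovBy (cs : CoxeterSystem M W) (x y : W) : Prop :=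
  BruhatLT cs x y ∧ ∀ z, BruhatLT cs x z → BruhatLT cs z y → False

/-- The Bruhat interval `[u, v]`. -/
def BruhatInterval (cs : CoxeterSystem M W) (u v : W) : Set W :=
  {y | BruhatLE cs u y ∧ BruhatLE cs y v}

/-- The standard parabolic subgroup `W_J`. -/
def ParabolicSubgroup (cs : CoxeterSystem M W) (J : Set B) : Subgroup W :=
  Subgroup.closure (cs.simple '' J)

/-- `w` is the minimal-length representative of its coset `w * W_J`,
i.e. `w ∈ Wᴶ`. -/
def IsMinRep (cs : CoxeterSystem M W) (J : Set B) (w : W) : Prop :=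
  ∀ x ∈ ParabolicSubgroup cs J, cs.length w ≤ cs.length (w * x)

/-- The set `Aᴶ_{u,v}` of atoms of `[u,v]` lying in `Wᴶ`. -/
def AtomSet (cs : CoxeterSystem M W) (J : Set B) (u v : W) : Set W :=
  {a | IsMinRep cs J a ∧ BruhatCovBy cs u a ∧ BruhatLE cs a v}

/-- The parabolic quotient interval `[u,v]ᴶ = [u,v] ∩ Wᴶ`. -/
def QuotInterval (cs : CoxeterSystem M W) (J : Set B) (u v : W) : Set W :=
  {y | IsMinRep cs J y ∧ BruhatLE cs u y ∧ BruhatLE cs y v}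

/-- The family of ordinary Kazhdan–Lusztig `R`-polynomials, characterized by
its defining recursion. -/
def IsRFamily (cs : CoxeterSystem M W) (R : W → W → Polynomial ℤ) : Prop :=
  (∀ u v, ¬ BruhatLE cs u v → R u v = 0) ∧
  (∀ u, R u u = 1) ∧
  (∀ (i : B) (u v : W), cs.length (cs.simple i * v) < cs.length v →
    (cs.length (cs.simple i * u) < cs.length u →
      R u v = R (cs.simple i * u) (cs.simple i * v)) ∧
    (cs.length u < cs.length (cs.simple i * u) →
      R u v = (X - 1) * R u (cs.simple i * v)
            + X * R (cs.simple i * u) (cs.simple i * v)))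

/-- The family of ordinary Kazhdan–Lusztig polynomials `P_{u,v}`, characterized
by its defining properties, relative to a family `R` of `R`-polynomials. -/
def IsPFamily (cs : CoxeterSystem M W) (R P : W → W → Polynomial ℤ) : Prop :=
  (∀ u v, ¬ BruhatLE cs u v → P u v = 0) ∧
  (∀ u, P u u = 1) ∧
  (∀ u v, BruhatLT cs u v →
    2 * (P u v).natDegree + 1 ≤ cs.length v - cs.length u) ∧
  (∀ u v, BruhatLE cs u v →
    (P u v).reflect (cs.length v - cs.length u) =
      ∑ᶠ σ ∈ BruhatInterval cs u v, R u σ * P σ v)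

/-- The family of parabolic `R`-polynomials `R^{J,x}_{u,v}` of Deodhar,
characterized by its defining recursion. -/
def IsParaRFamily (cs : CoxeterSystem M W) (J : Set B) (x : Polynomial ℤ)
    (R : W → W → Polynomial ℤ) : Prop :=
  (∀ u v, IsMinRep cs J u → IsMinRep cs J v → ¬ BruhatLE cs u v → R u v = 0) ∧
  (∀ u, IsMinRep cs J u → R u u = 1) ∧
  (∀ (i : B) (u v : W), IsMinRep cs J u → IsMinRep cs J v →
    cs.length (cs.simple i * v) < cs.length v →
    (cs.length (cs.simple i * u) < cs.length u →
      R u v = R (cs.simple i * u) (cs.simple i * v)) ∧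
    (cs.length u < cs.length (cs.simple i * u) →
      IsMinRep cs J (cs.simple i * u) →
      R u v = (X - 1) * R u (cs.simple i * v)
            + X * R (cs.simple i * u) (cs.simple i * v)) ∧
    (cs.length u < cs.length (cs.simple i * u) →
      ¬ IsMinRep cs J (cs.simple i * u) →
      R u v = (X - 1 - x) * R u (cs.simple i * v)))

/-- The family of parabolic Kazhdan–Lusztig polynomials `P^{J,x}_{u,v}` of
Deodhar, characterized by its defining properties, relative to a family `R`
of parabolic `R`-polynomials. -/
def IsParaPFamily (cs : CoxeterSystem M W) (J : Set B)
    (R P : W → W → Polynomial ℤ) : Prop :=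
  (∀ u v, IsMinRep cs J u → IsMinRep cs J v → ¬ BruhatLE cs u v → P u v = 0) ∧
  (∀ u, IsMinRep cs J u → P u u = 1) ∧
  (∀ u v, IsMinRep cs J u → IsMinRep cs J v → BruhatLT cs u v →
    2 * (P u v).natDegree + 1 ≤ cs.length v - cs.length u) ∧
  (∀ u v, IsMinRep cs J u → IsMinRep cs J v → BruhatLE cs u v →
    (P u v).reflect (cs.length v - cs.length u) =
      ∑ᶠ σ ∈ QuotInterval cs J u v, R u σ * P σ v)

section Bruhat

variable {cs : CoxeterSystem M W}

local prefix:100 "π" => cs.wordProd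

theorem BruhatLE.refl (w : W) : BruhatLE cs w w := Relation.ReflTransGen.refl

theorem BruhatLE.trans {u v w : W} (h₁ : BruhatLE cs u v) (h₂ : BruhatLE cs v w) :
    BruhatLE cs u w :=
  Relation.ReflTransGen.trans h₁ h₂

theorem BruhatLE.eq_or_length_lt {u v : W} (h : BruhatLE cs u v) :
    u = v ∨ cs.length u < cs.length v := by
  induction h with
  | refl => exact Or.inl rfl
  | tail _ hstep ih =>
    obtain ⟨t, -, rfl, hlen⟩ := hstep
    rcases ih with rfl | ih
    · exact Or.inr hlen
    · exact Or.inr (ih.trans hlen)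

theorem BruhatLE.eq_of_length_le {u v : W} (h : BruhatLE cs u v)
    (hlen : cs.length v ≤ cs.length u) : u = v :=
  h.eq_or_length_lt.resolve_right (not_lt.2 hlen)

theorem BruhatLT.length_lt {u v : W} (h : BruhatLT cs u v) : cs.length u < cs.length v :=
  h.1.eq_or_length_lt.resolve_left h.2

theorem BruhatLE.isReflection_of_length_le_succ {u v : W} (h : BruhatLE cs u v) (hne : u ≠ v)
    (hlen : cs.length v ≤ cs.length u + 1) : cs.IsReflection (u⁻¹ * v) := by
  rcases Relation.ReflTransGen.cases_head h with rfl | ⟨w, ⟨t, ht, rfl, hl⟩, hwv⟩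
  · exact absurd rfl hne
  · obtain rfl := BruhatLE.eq_of_length_le (cs := cs) hwv (by omega)
    simpa using ht

theorem bruhatLE_wordProd_append_cons (a b : List B) (i : B)
    (hlen : cs.length (π (a ++ b)) < cs.length (π (a ++ i :: b))) :
    BruhatLE cs (π (a ++ b)) (π (a ++ i :: b)) := by
  refine Relation.ReflTransGen.single ⟨(π b)⁻¹ * cs.simple i * π b, ?_, ?_, hlen⟩
  · simpa using cs.isReflection_simple i |>.conj (π b)⁻¹
  · simp [cs.wordProd_append, cs.wordProd_cons, mul_assoc]

theorem bruhatLE_wordProd_append {a b : List B} (h : cs.IsReduced (a ++ b)) :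
    BruhatLE cs (π a) (π (a ++ b)) := by
  induction b generalizing a with
  | nil => simpa using BruhatLE.refl _
  | cons i b ih =>
    rw [← List.singleton_append, ← List.append_assoc] at h ⊢
    have hai : cs.IsReduced (a ++ [i]) := by
      simpa only [List.take_left] using h.take (a ++ [i]).length
    refine BruhatLE.trans ?_ (ih h)
    have hlt : cs.length (π a) < cs.length (π (a ++ [i])) := by
      rw [hai.eq]; simpa using (cs.length_wordProd_le a).trans_lt (Nat.lt_succ_self _)
    simpa using bruhatLE_wordProd_append_cons a [] i (by simpa using hlt)

theorem one_bruhatLE (w : W) : BruhatLE cs 1 w := by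
  obtain ⟨ω, hω, rfl⟩ := cs.exists_isReduced w
  simpa using bruhatLE_wordProd_append (a := []) (by simpa using hω)

theorem bruhatCovBy_one_iff {a : W} : BruhatCovBy cs 1 a ↔ cs.length a = 1 := by
  constructor
  · rintro ⟨⟨-, hne⟩, hcov⟩
    obtain ⟨ω, hω, rfl⟩ := cs.exists_isReduced a
    have hpos : 0 < ω.length := by
      rw [← hω.eq, Nat.pos_iff_ne_zero, Ne, cs.length_eq_zero_iff]; exact hne.symm
    obtain ⟨i, ω', rfl⟩ := List.exists_cons_of_length_pos hpos
    by_contra h1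
    have hs : BruhatLE cs (cs.simple i) (π (i :: ω')) := by
      simpa using bruhatLE_wordProd_append (a := [i]) (b := ω') hω
    refine hcov (cs.simple i) ⟨one_bruhatLE _, fun h => ?_⟩ ⟨hs, fun h => ?_⟩
    · simpa using congrArg cs.length h
    · exact h1 (by rw [← h, cs.length_simple])
  · intro h
    refine ⟨⟨one_bruhatLE a, fun h1 => by simp [← h1] at h⟩, fun z h1 h2 => ?_⟩
    have := h1.length_lt
    have := h2.length_lt
    simp only [cs.length_one] at *
    omega

end Bruhat

section MinRep

variable {cs : CoxeterSystem M W}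

local prefix:100 "π" => cs.wordProd

theorem IsMinRep.simple_mul {J : Set B} {v : W} {i : B} (hv : IsMinRep cs J v)
    (hi : cs.length (cs.simple i * v) < cs.length v) : IsMinRep cs J (cs.simple i * v) := by
  intro x hx
  -- `ℓ (s v x) ≥ ℓ (v x) - 1 ≥ ℓ v - 1 = ℓ (s v)`
  have := hv x hx
  have := cs.length_simple_mul (v * x) i
  have := cs.length_simple_mul v i
  rw [mul_assoc]
  omega

theorem mem_closure_singleton_of_mul_self {g x : W} (hg : g * g = 1)
    (hx : x ∈ Subgroup.closure {g}) : x = 1 ∨ x = g := by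
  induction hx using Subgroup.closure_induction with
  | mem y hy => exact Or.inr hy
  | one => exact Or.inl rfl
  | mul y z _ _ hy hz => rcases hy with rfl | rfl <;> rcases hz with rfl | rfl <;> simp [hg]
  | inv y _ hy => rcases hy with rfl | rfl <;> simp [inv_eq_of_mul_eq_one_right hg]

theorem isMinRep_singleton_iff {i : B} {w : W} :
    IsMinRep cs {i} w ↔ cs.length w ≤ cs.length (w * cs.simple i) := by
  refine ⟨fun h => h _ (Subgroup.subset_closure (by simp)), fun h x hx => ?_⟩
  rw [ParabolicSubgroup, Set.image_singleton] at hx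
  rcases mem_closure_singleton_of_mul_self (cs.simple_mul_simple_self i) hx with rfl | rfl
  exacts [by simp, h]

theorem isMinRep_singleton_of_isReduced {l : List B} {j : B} (h : cs.IsReduced (l ++ [j])) :
    IsMinRep cs {j} (π l) := by
  rw [isMinRep_singleton_iff, ← cs.wordProd_singleton, ← cs.wordProd_append, h.eq]
  simpa using (cs.length_wordProd_le l).trans (Nat.le_succ _)

theorem not_isMinRep_singleton_of_mul_eq {l l' : List B} {j : B} (hl : cs.IsReduced l)
    (h : π l * cs.simple j = π l') (hlt : l'.length < l.length) : ¬ IsMinRep cs {j} (π l) := by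
  rw [isMinRep_singleton_iff, h, hl.eq, not_le]
  exact (cs.length_wordProd_le l').trans_lt hlt

theorem isMinRep_singleton_simple_iff {i j : B} :
    IsMinRep cs {j} (cs.simple i) ↔ cs.simple i ≠ cs.simple j := by
  rw [isMinRep_singleton_iff, cs.length_simple, Nat.one_le_iff_ne_zero, Ne, Ne,
    cs.length_eq_zero_iff, mul_eq_one_iff_eq_inv, cs.inv_simple]

theorem atomSet_one_singleton {v : W} (hv : ∀ i, BruhatLE cs (cs.simple i) v) (j : B) :
    AtomSet cs {j} 1 v = cs.simple '' {i | cs.simple i ≠ cs.simple j} := by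
  ext a
  simp only [AtomSet, bruhatCovBy_one_iff, cs.length_eq_one_iff, Set.mem_ofPred_eq,
    Set.mem_image]
  constructor
  · rintro ⟨hmin, ⟨i, rfl⟩, -⟩
    exact ⟨i, isMinRep_singleton_simple_iff.1 hmin, rfl⟩
  · rintro ⟨i, hi, rfl⟩
    exact ⟨isMinRep_singleton_simple_iff.2 hi, ⟨i, rfl⟩, hv i⟩

theorem ncard_atomSet_one_singleton [Finite B] (hinj : Function.Injective cs.simple) {v : W}
    (hv : ∀ i, BruhatLE cs (cs.simple i) v) (j : B) :
    (AtomSet cs {j} 1 v).ncard = Nat.card B - 1 := by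
  rw [atomSet_one_singleton hv, Set.ncard_image_of_injective _ hinj]
  simp_rw [hinj.ne_iff]
  rw [← Set.compl_singleton_eq, Set.ncard_compl, Set.ncard_singleton]

end MinRep

open scoped List

theorem _root_.List.Sublist.sublist_of_subset {α : Type*} {ω l₁ l₂ : List α}
    (h₁ : l₁ <+ ω) (h₂ : l₂ <+ ω) (hω : ω.Nodup) (h : l₁ ⊆ l₂) :
    l₁ <+ l₂ := by
  induction ω generalizing l₁ l₂ with
  | nil => simp_all
  | cons a ω ih =>
    have ha : a ∉ ω := (List.nodup_cons.1 hω).1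
    have hsub {l l' : List α} (hl : l <+ ω) (h : l ⊆ a :: l') : l ⊆ l' := fun x hx =>
      (List.mem_cons.1 (h hx)).resolve_left fun e => ha (e ▸ hl.subset hx)
    rcases List.sublist_cons_iff.1 h₁ with h₁' | ⟨r₁, rfl, h₁'⟩ <;>
      rcases List.sublist_cons_iff.1 h₂ with h₂' | ⟨r₂, rfl, h₂'⟩
    · exact ih h₁' h₂' hω.of_cons h
    · exact (ih h₁' h₂' hω.of_cons (hsub h₁' h)).cons a
    · exact absurd (h₂'.subset (h List.mem_cons_self)) ha
    · exact (ih h₁' h₂' hω.of_cons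
        (hsub h₁' fun x hx => h (List.mem_cons_of_mem a hx))).cons_cons a

section BooleanWord

variable {cs : CoxeterSystem M W}

local prefix:100 "π" => cs.wordProd

theorem bruhatLE_wordProd_of_sublist {l₁ l₂ : List B} (h : l₁ <+ l₂)
    (hred : ∀ l, l <+ l₂ → cs.IsReduced l) : BruhatLE cs (π l₁) (π l₂) := by
  suffices ∀ p, (∀ l, l <+ p ++ l₂ → cs.IsReduced l) →
      BruhatLE cs (π (p ++ l₁)) (π (p ++ l₂)) by
    simpa using this [] (by simpa using hred)
  clear hred
  induction h with
  | slnil => exact fun p _ => BruhatLE.refl _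
  | @cons l₁ l₂ a _ ih =>
    intro p hp
    refine (ih p fun l hl => hp l (hl.trans (by simp))).trans
      (bruhatLE_wordProd_append_cons p l₂ a ?_)
    rw [(hp _ (by simp)).eq, (hp _ (List.Sublist.refl _)).eq]
    simp
  | @cons_cons l₁ l₂ a _ ih =>
    exact fun p hp => by simpa using ih (p ++ [a]) (by simpa using hp)

variable (cs) in
/-- These properties hold for every word without repeated letters; here they are hypotheses,
checked by computation in the two cases needed. -/
structure IsBooleanWord (ω : List B) : Prop where
  nodup : ω.Nodup
  isReduced : ∀ l, l <+ ω → cs.IsReduced l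
  exists_sublist_of_bruhatLE :
    ∀ y, BruhatLE cs y (cs.wordProd ω) → ∃ l, l <+ ω ∧ y = cs.wordProd l
  mem_of_simple_bruhatLE :
    ∀ l, l <+ ω → ∀ i, BruhatLE cs (cs.simple i) (cs.wordProd l) → i ∈ l

namespace IsBooleanWord

variable {ω l l₁ l₂ : List B}

theorem bruhatLE_of_sublist (hB : IsBooleanWord cs ω) (h : l₁ <+ l₂) (h₂ : l₂ <+ ω) :
    BruhatLE cs (π l₁) (π l₂) :=
  bruhatLE_wordProd_of_sublist h fun l hl => hB.isReduced l (hl.trans h₂)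

theorem simple_bruhatLE_iff (hB : IsBooleanWord cs ω) (hl : l <+ ω) {i : B} :
    BruhatLE cs (cs.simple i) (π l) ↔ i ∈ l :=
  ⟨hB.mem_of_simple_bruhatLE l hl i, fun hi => by
    simpa using hB.bruhatLE_of_sublist (List.singleton_sublist.2 hi) hl⟩

theorem bruhatLE_iff (hB : IsBooleanWord cs ω) (h₁ : l₁ <+ ω) (h₂ : l₂ <+ ω) :
    BruhatLE cs (π l₁) (π l₂) ↔ l₁ <+ l₂ := by
  refine ⟨fun h => h₁.sublist_of_subset h₂ hB.nodup fun i hi => ?_,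
    fun h => hB.bruhatLE_of_sublist h h₂⟩
  exact (hB.simple_bruhatLE_iff h₂).1 (((hB.simple_bruhatLE_iff h₁).2 hi).trans h)

theorem wordProd_inj (hB : IsBooleanWord cs ω) (h₁ : l₁ <+ ω) (h₂ : l₂ <+ ω) :
    π l₁ = π l₂ ↔ l₁ = l₂ := by
  refine ⟨fun h => ?_, congrArg _⟩
  exact ((hB.bruhatLE_iff h₁ h₂).1 (h ▸ BruhatLE.refl _)).antisymm
    ((hB.bruhatLE_iff h₂ h₁).1 (h ▸ BruhatLE.refl _))

theorem exists_orderIso_boolean (hB : IsBooleanWord cs ω) (hall : ∀ i, i ∈ ω) :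
    ∃ f : W → Set B, Set.BijOn f (BruhatInterval cs 1 (π ω)) Set.univ ∧
      ∀ y ∈ BruhatInterval cs 1 (π ω), ∀ y' ∈ BruhatInterval cs 1 (π ω),
        (BruhatLE cs y y' ↔ f y ⊆ f y') := by
  classical
  refine ⟨fun y => {i | BruhatLE cs (cs.simple i) y}, ⟨fun _ _ => trivial, ?_, ?_⟩, ?_⟩
  · rintro y ⟨-, hy⟩ y' ⟨-, hy'⟩ h
    obtain ⟨l, hl, rfl⟩ := hB.exists_sublist_of_bruhatLE y hy
    obtain ⟨l', hl', rfl⟩ := hB.exists_sublist_of_bruhatLE y' hy'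
    have hmem : ∀ i, i ∈ l ↔ i ∈ l' := fun i => by
      rw [← hB.simple_bruhatLE_iff hl, ← hB.simple_bruhatLE_iff hl']
      exact Set.ext_iff.1 h i
    exact congrArg _ ((hl.sublist_of_subset hl' hB.nodup fun i => (hmem i).1).antisymm
      (hl'.sublist_of_subset hl hB.nodup fun i => (hmem i).2))
  · intro S _
    have hl : ω.filter (· ∈ S) <+ ω := List.filter_sublist
    refine ⟨π (ω.filter (· ∈ S)),
      ⟨one_bruhatLE _, hB.bruhatLE_of_sublist hl (List.Sublist.refl _)⟩, ?_⟩
    ext i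
    simp [hB.simple_bruhatLE_iff hl, hall i]
  · rintro y ⟨-, hy⟩ y' ⟨-, hy'⟩
    obtain ⟨l, hl, rfl⟩ := hB.exists_sublist_of_bruhatLE y hy
    obtain ⟨l', hl', rfl⟩ := hB.exists_sublist_of_bruhatLE y' hy'
    rw [hB.bruhatLE_iff hl hl']
    simp only [Set.ofPred_subset_ofPred, hB.simple_bruhatLE_iff hl, hB.simple_bruhatLE_iff hl']
    exact ⟨fun h _ hi => h.subset hi, hl.sublist_of_subset hl' hB.nodup⟩

end IsBooleanWord

end BooleanWord

theorem _root_.Polynomial.coeff_eq_zero_of_reflect_eq {R : Type*} [Semiring R] {p q : R[X]}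
    {N k : ℕ} (h : p.reflect N = q) (hk : p.natDegree + k < N) : q.coeff k = 0 := by
  rw [← h, coeff_reflect, revAt_le (by omega)]
  exact coeff_eq_zero_of_natDegree_lt (by omega)

section BooleanPolynomials

variable {cs : CoxeterSystem M W}

local prefix:100 "π" => cs.wordProd

theorem simple_mul_wordProd_cons (i : B) (b : List B) : cs.simple i * π (i :: b) = π b := by
  rw [cs.wordProd_cons, cs.simple_mul_simple_cancel_left]

theorem length_wordProd_lt_cons {i : B} {b : List B} (h : cs.IsReduced (i :: b)) :
    cs.length (π b) < cs.length (π (i :: b)) := by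
  rw [h.eq]
  exact (cs.length_wordProd_le b).trans_lt (by simp)

theorem length_simple_mul_wordProd_cons_lt {i : B} {b : List B} (h : cs.IsReduced (i :: b)) :
    cs.length (cs.simple i * π (i :: b)) < cs.length (π (i :: b)) := by
  rw [simple_mul_wordProd_cons]
  exact length_wordProd_lt_cons h

theorem IsMinRep.of_cons {J : Set B} {i : B} {b : List B} (h : IsMinRep cs J (π (i :: b)))
    (hred : cs.IsReduced (i :: b)) : IsMinRep cs J (π b) := by
  rw [← simple_mul_wordProd_cons i b]
  exact h.simple_mul (length_simple_mul_wordProd_cons_lt hred)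

section Recursion

variable {J : Set B} {x : ℤ[X]} {R : W → W → ℤ[X]} {i : B} {l b : List B}

theorem IsParaRFamily.eq_of_cons_cons (hR : IsParaRFamily cs J x R) {a : List B}
    (ha : IsMinRep cs J (π (i :: a))) (hb : IsMinRep cs J (π (i :: b)))
    (hra : cs.IsReduced (i :: a)) (hrb : cs.IsReduced (i :: b)) :
    R (π (i :: a)) (π (i :: b)) = R (π a) (π b) := by
  have h := hR.2.2 i _ _ ha hb (length_simple_mul_wordProd_cons_lt hrb)
  rw [simple_mul_wordProd_cons, simple_mul_wordProd_cons] at h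
  exact h.1 (length_wordProd_lt_cons hra)

theorem IsParaRFamily.eq_of_isMinRep_cons (hR : IsParaRFamily cs J x R)
    (hl : IsMinRep cs J (π l)) (hb : IsMinRep cs J (π (i :: b)))
    (hil : IsMinRep cs J (π (i :: l))) (hrl : cs.IsReduced (i :: l))
    (hrb : cs.IsReduced (i :: b)) :
    R (π l) (π (i :: b)) = (X - 1) * R (π l) (π b) + X * R (π (i :: l)) (π b) := by
  have h := hR.2.2 i _ _ hl hb (length_simple_mul_wordProd_cons_lt hrb)
  rw [simple_mul_wordProd_cons, ← cs.wordProd_cons] at h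
  exact h.2.1 (length_wordProd_lt_cons hrl) hil

theorem IsParaRFamily.eq_of_not_isMinRep_cons (hR : IsParaRFamily cs J x R)
    (hl : IsMinRep cs J (π l)) (hb : IsMinRep cs J (π (i :: b)))
    (hil : ¬ IsMinRep cs J (π (i :: l))) (hrl : cs.IsReduced (i :: l))
    (hrb : cs.IsReduced (i :: b)) :
    R (π l) (π (i :: b)) = (X - 1 - x) * R (π l) (π b) := by
  have h := hR.2.2 i _ _ hl hb (length_simple_mul_wordProd_cons_lt hrb)
  rw [simple_mul_wordProd_cons, ← cs.wordProd_cons] at h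
  exact h.2.2 (length_wordProd_lt_cons hrl) hil

end Recursion

theorem IsParaPFamily.natDegree_boolean {J : Set B} {mr : List B → Prop} {ω l : List B}
    {R P : W → W → ℤ[X]} (hP : IsParaPFamily cs J R P) (hB : IsBooleanWord cs ω)
    (hmr : ∀ l, l <+ ω → (IsMinRep cs J (π l) ↔ mr l))
    (hl : l <+ ω) (hml : mr l) (hmω : mr ω) (hne : l ≠ ω) :
    2 * (P (π l) (π ω)).natDegree + 1 ≤ ω.length - l.length := by
  have hω : ω <+ ω := List.Sublist.refl _
  rw [← (hB.isReduced l hl).eq, ← (hB.isReduced ω hω).eq]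
  exact hP.2.2.1 _ _ ((hmr l hl).2 hml) ((hmr ω hω).2 hmω)
    ⟨hB.bruhatLE_of_sublist hl hω, mt (hB.wordProd_inj hl hω).1 hne⟩

variable [DecidableEq B] (mr : List B → Prop) [DecidablePred mr] (x : ℤ[X])

/-- The recursion defining `IsParaRFamily`, run on subwords of a Boolean word: the left descent
`i` of `i :: b` is a descent of `l` exactly when `l` starts with `i`, and `mr` decides whether
an element lies in `Wᴶ`. -/
noncomputable def boolR : List B → List B → ℤ[X]
  | l, [] => if l = [] then 1 else 0
  | l, i :: b =>
    if l.head? = some i then boolR l.tail b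
    else if mr (i :: l) then (X - 1) * boolR l b + X * boolR (i :: l) b
    else (X - 1 - x) * boolR l b

@[simp]
theorem boolR_self (l : List B) : boolR mr x l l = 1 := by
  induction l <;> simp [boolR, *]

theorem boolR_eq_zero_of_not_sublist {l l' : List B} (h : ¬ l <+ l') : boolR mr x l l' = 0 := by
  induction l' generalizing l with
  | nil => simpa [boolR] using h
  | cons i b ih =>
    by_cases hl : l.head? = some i
    · obtain ⟨a, rfl⟩ : ∃ a, l = i :: a := ⟨l.tail, List.eq_cons_of_mem_head? hl⟩
      simpa [boolR] using ih (mt (List.Sublist.cons_cons i) h)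
    · have hb : ¬ l <+ b := mt (List.Sublist.cons i) h
      have hib : ¬ i :: l <+ b := fun h' => hb ((List.sublist_cons_self i l).trans h')
      simp [boolR, hl, ih hb, ih hib]

variable {mr x} in
theorem IsParaRFamily.eq_boolR {J : Set B} {R : W → W → ℤ[X]} {ω : List B}
    (hR : IsParaRFamily cs J x R) (hB : IsBooleanWord cs ω)
    (hmr : ∀ l, l <+ ω → (IsMinRep cs J (π l) ↔ mr l)) {l l' : List B}
    (hl : l <+ ω) (hl' : l' <+ ω) (hml : mr l) (hml' : mr l') :
    R (π l) (π l') = boolR mr x l l' := by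
  induction l' generalizing l with
  | nil =>
    by_cases h : l = []
    · subst h
      simpa [boolR] using hR.2.1 1 (by simpa using (hmr [] hl).2 hml)
    · rw [boolR, if_neg h]
      refine hR.1 _ _ ((hmr l hl).2 hml) ((hmr [] hl').2 hml') ?_
      rwa [hB.bruhatLE_iff hl hl', List.sublist_nil]
  | cons i b ih =>
    have hrb := hB.isReduced _ hl'
    have hb : b <+ ω := (List.sublist_cons_self i b).trans hl'
    have hmb : mr b := (hmr b hb).1 (((hmr _ hl').2 hml').of_cons hrb)
    have hmib := (hmr _ hl').2 hml'
    by_cases hhead : l.head? = some i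
    · obtain ⟨a, rfl⟩ : ∃ a, l = i :: a := ⟨l.tail, List.eq_cons_of_mem_head? hhead⟩
      have ha : a <+ ω := (List.sublist_cons_self i a).trans hl
      have hra := hB.isReduced _ hl
      rw [hR.eq_of_cons_cons ((hmr _ hl).2 hml) hmib hra hrb,
        ih ha hb ((hmr a ha).1 (((hmr _ hl).2 hml).of_cons hra)) hmb]
      simp [boolR]
    by_cases hsub : l <+ i :: b
    · have hlb : l <+ b := by
        rcases List.sublist_cons_iff.1 hsub with h | ⟨r, rfl, -⟩
        exacts [h, absurd rfl hhead]
      have hil : i :: l <+ ω := (hlb.cons_cons i).trans hl'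
      have hrl := hB.isReduced _ hil
      by_cases hm : mr (i :: l)
      · rw [hR.eq_of_isMinRep_cons ((hmr l hl).2 hml) hmib ((hmr _ hil).2 hm) hrl hrb,
          ih hl hb hml hmb, ih hil hb hm hmb]
        simp [boolR, hhead, hm]
      · rw [hR.eq_of_not_isMinRep_cons ((hmr l hl).2 hml) hmib (mt (hmr _ hil).1 hm) hrl hrb,
          ih hl hb hml hmb]
        simp [boolR, hhead, hm]
    · rw [boolR_eq_zero_of_not_sublist mr x hsub]
      exact hR.1 _ _ ((hmr l hl).2 hml) hmib (by rwa [hB.bruhatLE_iff hl hl'])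

/-- Indexes the parabolic interval `[π l, π ω]ᴶ`. -/
def quotSublists (ω l : List B) : List (List B) :=
  ω.sublists.filter fun l' => l <+ l' ∧ mr l'

/-- The off-diagonal part of the sum in the defining identity of `IsParaPFamily`. -/
noncomputable def boolPSum (Q : List B → ℤ[X]) (ω l : List B) : ℤ[X] :=
  (((quotSublists mr ω l).erase l).map fun l' => boolR mr x l l' * Q l').sum

variable {mr x} {J : Set B} {ω l : List B}

theorem IsBooleanWord.quotInterval_eq (hB : IsBooleanWord cs ω)
    (hmr : ∀ l, l <+ ω → (IsMinRep cs J (π l) ↔ mr l)) (hl : l <+ ω) :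
    QuotInterval cs J (π l) (π ω) = cs.wordProd '' {l' | l' ∈ quotSublists mr ω l} := by
  ext y
  simp only [QuotInterval, quotSublists, Set.mem_ofPred_eq, Set.mem_image, List.mem_filter,
    List.mem_sublists, decide_eq_true_eq]
  constructor
  · rintro ⟨hy, hly, hyω⟩
    obtain ⟨l', hl', rfl⟩ := hB.exists_sublist_of_bruhatLE y hyω
    exact ⟨l', ⟨hl', (hB.bruhatLE_iff hl hl').1 hly, (hmr l' hl').1 hy⟩, rfl⟩
  · rintro ⟨l', ⟨hl', hll', hm⟩, rfl⟩
    exact ⟨(hmr l' hl').2 hm, (hB.bruhatLE_iff hl hl').2 hll',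
      hB.bruhatLE_of_sublist hl' (List.Sublist.refl _)⟩

variable {R P : W → W → ℤ[X]}

theorem IsParaPFamily.reflect_eq_sum_boolR (hR : IsParaRFamily cs J x R)
    (hP : IsParaPFamily cs J R P) (hB : IsBooleanWord cs ω)
    (hmr : ∀ l, l <+ ω → (IsMinRep cs J (π l) ↔ mr l)) (hl : l <+ ω) (hml : mr l)
    (hmω : mr ω) :
    (P (π l) (π ω)).reflect (ω.length - l.length) =
      ((quotSublists mr ω l).map fun l' => boolR mr x l l' * P (π l') (π ω)).sum := by
  have hω : ω <+ ω := List.Sublist.refl _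
  have hnd : (quotSublists mr ω l).Nodup := (List.nodup_sublists.2 hB.nodup).filter _
  have hsub : ∀ l' ∈ quotSublists mr ω l, l' <+ ω ∧ mr l' := fun l' h => by
    simp only [quotSublists, List.mem_filter, List.mem_sublists, decide_eq_true_eq] at h
    exact ⟨h.1, h.2.2⟩
  rw [← (hB.isReduced l hl).eq, ← (hB.isReduced ω hω).eq,
    hP.2.2.2 _ _ ((hmr l hl).2 hml) ((hmr ω hω).2 hmω) (hB.bruhatLE_of_sublist hl hω),
    hB.quotInterval_eq hmr hl, finsum_mem_image, ← List.coe_toFinset, finsum_mem_coe_finset,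
    List.sum_toFinset _ hnd]
  · refine congrArg List.sum (List.map_congr_left fun l' hl' => ?_)
    rw [hR.eq_boolR hB hmr hl (hsub l' hl').1 hml (hsub l' hl').2]
  · exact fun a ha b hb h => (hB.wordProd_inj (hsub a ha).1 (hsub b hb).1).1 h

theorem IsParaPFamily.coeff_boolean (hR : IsParaRFamily cs J x R)
    (hP : IsParaPFamily cs J R P) (hB : IsBooleanWord cs ω)
    (hmr : ∀ l, l <+ ω → (IsMinRep cs J (π l) ↔ mr l)) (hl : l <+ ω) (hml : mr l)
    (hmω : mr ω) {k : ℕ} (hk : (P (π l) (π ω)).natDegree + k < ω.length - l.length) :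
    (P (π l) (π ω)).coeff k = -(boolPSum mr x (fun l' => P (π l') (π ω)) ω l).coeff k := by
  have hmem : l ∈ quotSublists mr ω l := by simpa [quotSublists, hml] using hl
  have h := coeff_eq_zero_of_reflect_eq (hP.reflect_eq_sum_boolR hR hB hmr hl hml hmω) hk
  rw [← List.sum_map_erase _ hmem, boolR_self, one_mul, coeff_add] at h
  simp only [boolPSum, List.erase_eq_eraseP, Bool.beq_eq_decide_eq] at h ⊢
  exact eq_neg_of_add_eq_zero_left h

theorem IsParaPFamily.eq_C_boolean (hR : IsParaRFamily cs J x R)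
    (hP : IsParaPFamily cs J R P) (hB : IsBooleanWord cs ω)
    (hmr : ∀ l, l <+ ω → (IsMinRep cs J (π l) ↔ mr l)) (hl : l <+ ω) (hml : mr l)
    (hmω : mr ω) (hN₁ : 1 ≤ ω.length - l.length) (hN₂ : ω.length - l.length ≤ 2) :
    P (π l) (π ω) = C (-(boolPSum mr x (fun l' => P (π l') (π ω)) ω l).coeff 0) := by
  have hdeg := hP.natDegree_boolean hB hmr hl hml hmω (by rintro rfl; omega)
  rw [← hP.coeff_boolean hR hB hmr hl hml hmω (by omega)]
  exact eq_C_of_natDegree_eq_zero (by omega)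

theorem IsParaPFamily.eq_C_add_C_mul_X_boolean (hR : IsParaRFamily cs J x R)
    (hP : IsParaPFamily cs J R P) (hB : IsBooleanWord cs ω)
    (hmr : ∀ l, l <+ ω → (IsMinRep cs J (π l) ↔ mr l)) (hl : l <+ ω) (hml : mr l)
    (hmω : mr ω) (hN₂ : 2 ≤ ω.length - l.length) (hN₄ : ω.length - l.length ≤ 4) :
    P (π l) (π ω) = C (-(boolPSum mr x (fun l' => P (π l') (π ω)) ω l).coeff 0) +
      C (-(boolPSum mr x (fun l' => P (π l') (π ω)) ω l).coeff 1) * X := by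
  have hdeg := hP.natDegree_boolean hB hmr hl hml hmω (by rintro rfl; omega)
  rw [← hP.coeff_boolean hR hB hmr hl hml hmω (by omega),
    ← hP.coeff_boolean hR hB hmr hl hml hmω (by omega), add_comm]
  exact eq_X_add_C_of_natDegree_le_one (by omega)

end BooleanPolynomials

namespace TypeA3

def simpleTransposition (i : Fin 3) : Equiv.Perm (Fin 4) := Equiv.swap i.castSucc i.succ

theorem simpleTransposition_isLiftable :
    (CoxeterMatrix.A 3).IsLiftable simpleTransposition := by
  intro i j; fin_cases i <;> fin_cases j <;> decide

def permOfWord (ω : List (Fin 3)) : Equiv.Perm (Fin 4) := (ω.map simpleTransposition).prod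

def wordsOfLengthLE : ℕ → List (List (Fin 3))
  | 0 => [[]]
  | n + 1 => [] :: (wordsOfLengthLE n).flatMap fun ω => (List.finRange 3).map (· :: ω)

theorem mem_wordsOfLengthLE {n : ℕ} {ω : List (Fin 3)} (h : ω.length ≤ n) :
    ω ∈ wordsOfLengthLE n := by
  induction n generalizing ω with
  | zero => simp_all [wordsOfLengthLE]
  | succ n ih =>
    cases ω with
    | nil => simp [wordsOfLengthLE]
    | cons i ω =>
      simp only [wordsOfLengthLE, List.mem_cons, List.mem_flatMap, List.mem_map]
      exact Or.inr ⟨ω, ih (by simpa using h), i, List.mem_finRange i, rfl⟩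

instance : DecidablePred (Equiv.Perm.IsSwap : Equiv.Perm (Fin 4) → Prop) :=
  fun σ => inferInstanceAs (Decidable (∃ x y, x ≠ y ∧ σ = Equiv.swap x y))

variable {W : Type*} [Group W] (cs : CoxeterSystem (CoxeterMatrix.A 3) W)

local prefix:100 "π" => cs.wordProd

noncomputable def toPerm : W →* Equiv.Perm (Fin 4) :=
  cs.lift ⟨simpleTransposition, simpleTransposition_isLiftable⟩

theorem toPerm_simple (i : Fin 3) : toPerm cs (cs.simple i) = simpleTransposition i :=
  cs.lift_apply_simple simpleTransposition_isLiftable i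

theorem toPerm_wordProd (ω : List (Fin 3)) : toPerm cs (π ω) = permOfWord ω := by
  induction ω with
  | nil => simp [permOfWord]
  | cons i ω ih => simp [cs.wordProd_cons, toPerm_simple, ih, permOfWord]

theorem simple_injective : Function.Injective cs.simple := fun i j h => by
  have key : ∀ i j : Fin 3, simpleTransposition i = simpleTransposition j → i = j := by decide
  exact key i j (by rw [← toPerm_simple cs, ← toPerm_simple cs, h])

theorem isReduced_of_permOfWord {ω : List (Fin 3)}
    (h : ∀ ρ ∈ wordsOfLengthLE (ω.length - 1),
      ρ.length < ω.length → permOfWord ρ ≠ permOfWord ω) :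
    cs.IsReduced ω := by
  refine le_antisymm (cs.length_wordProd_le ω) (not_lt.1 fun hlt => ?_)
  obtain ⟨ρ, hρ, hρω⟩ := cs.exists_isReduced (π ω)
  have hlen : ρ.length < ω.length := by rw [← hρ.eq, ← hρω]; exact hlt
  refine h ρ (mem_wordsOfLengthLE (by omega)) hlen ?_
  rw [← toPerm_wordProd cs, ← toPerm_wordProd cs, ← hρω]

theorem isSwap_toPerm {t : W} (ht : cs.IsReflection t) : (toPerm cs t).IsSwap := by
  obtain ⟨w, i, rfl⟩ := ht
  refine ⟨toPerm cs w i.castSucc, toPerm cs w i.succ,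
    by simpa using (Fin.castSucc_lt_succ (i := i)).ne, ?_⟩
  rw [Equiv.swap_apply_apply, map_mul, map_mul, map_inv, toPerm_simple, simpleTransposition]

theorem not_bruhatLE_wordProd {ρ ω : List (Fin 3)} (hρ : cs.IsReduced ρ) (hω : cs.IsReduced ω)
    (hne : permOfWord ρ ≠ permOfWord ω)
    (h : ω.length ≤ ρ.length ∨
      (ω.length = ρ.length + 1 ∧ ¬ (permOfWord (ρ.reverse ++ ω)).IsSwap)) :
    ¬ BruhatLE cs (π ρ) (π ω) := by
  intro hle
  have hne' : π ρ ≠ π ω := fun e => hne <| by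
    rw [← toPerm_wordProd cs, ← toPerm_wordProd cs, e]
  rcases h with h | ⟨h, hswap⟩
  · exact hne' (hle.eq_of_length_le (by rw [hρ.eq, hω.eq]; exact h))
  · refine hswap ?_
    have := isSwap_toPerm cs (hle.isReflection_of_length_le_succ hne' (by rw [hρ.eq, hω.eq, h]))
    rwa [← cs.wordProd_reverse, ← cs.wordProd_append, toPerm_wordProd] at this

theorem not_isReduced_cons_cons (i : Fin 3) (l : List (Fin 3)) :
    ¬ cs.IsReduced (i :: i :: l) := by
  intro h
  have := cs.length_wordProd_le l
  rw [CoxeterSystem.IsReduced, cs.wordProd_cons, cs.wordProd_cons,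
    cs.simple_mul_simple_cancel_left] at h
  simp at h; omega

theorem simple_mul_simple_comm_zero_two :
    cs.simple 0 * cs.simple 2 = cs.simple 2 * cs.simple 0 := by
  have h := cs.simple_mul_simple_pow 0 2
  rwa [show (CoxeterMatrix.A 3) 0 2 = 2 by decide, sq, mul_eq_one_iff_eq_inv, mul_inv_rev,
    cs.inv_simple, cs.inv_simple] at h

theorem isBooleanWord_of_permOfWord {ω : List (Fin 3)} (hnd : ω.Nodup)
    (hred : ∀ l ∈ ω.sublists, ∀ ρ ∈ wordsOfLengthLE (l.length - 1),
      ρ.length < l.length → permOfWord ρ ≠ permOfWord l)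
    (hsupp : ∀ l ∈ ω.sublists, ∀ i, i ∉ l → permOfWord [i] ≠ permOfWord l ∧
      (l.length ≤ 1 ∨ (l.length = 2 ∧ ¬ (permOfWord (i :: l)).IsSwap)))
    (hdown : ∀ ρ ∈ wordsOfLengthLE (ω.length - 1), ρ.length < ω.length →
      cs.IsReduced ρ → BruhatLE cs (π ρ) (π ω) → ∃ l, l <+ ω ∧ π ρ = π l) :
    IsBooleanWord cs ω where
  nodup := hnd
  isReduced l hl := isReduced_of_permOfWord cs (hred l (List.mem_sublists.2 hl))
  exists_sublist_of_bruhatLE y hy := by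
    obtain ⟨ρ, hρ, rfl⟩ := cs.exists_isReduced y
    have hω := isReduced_of_permOfWord cs (hred ω (List.mem_sublists.2 (List.Sublist.refl _)))
    rcases hy.eq_or_length_lt with h | h
    · exact ⟨ω, List.Sublist.refl _, h⟩
    · rw [hρ.eq, hω.eq] at h
      exact hdown ρ (mem_wordsOfLengthLE (by omega)) h hρ hy
  mem_of_simple_bruhatLE l hl i hle := by
    by_contra hi
    have hsl := List.mem_sublists.2 hl
    exact not_bruhatLE_wordProd cs (ρ := [i]) (by simp [CoxeterSystem.IsReduced])
      (isReduced_of_permOfWord cs (hred l hsl)) (hsupp l hsl i hi).1 (hsupp l hsl i hi).2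
      (by simpa using hle)

theorem isBooleanWord_of_mem {ω : List (Fin 3)} (hω : ω ∈ [[0, 1, 2], [1, 0, 2]]) :
    IsBooleanWord cs ω := by
  simp only [List.mem_cons, List.not_mem_nil, or_false] at hω
  rcases hω with rfl | rfl <;>
    refine isBooleanWord_of_permOfWord cs (by decide) (by decide) (by decide)
      fun ρ hρ _ hred hle => ?_ <;>
    simp [wordsOfLengthLE] at hρ <;>
    rcases hρ with rfl | ⟨a, rfl⟩ | ⟨a, b, rfl⟩ <;> try fin_cases a <;> try fin_cases b
  -- a word of length `≤ 2` below `π ω` is a subword, is not reduced, is excluded because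
  -- `(π ρ)⁻¹ * π ω` is not a transposition, or is `[2, 0]`, equal to `[0, 2]`
  all_goals first
    | exact ⟨_, by decide, rfl⟩
    | exact absurd hred (not_isReduced_cons_cons cs _ _)
    | exact absurd hle (not_bruhatLE_wordProd cs hred
        (isReduced_of_permOfWord cs (by decide)) (by decide) (by decide))
    | exact ⟨[0, 2], by decide, by simp [cs.wordProd_cons, simple_mul_simple_comm_zero_two]⟩

theorem isMinRep_zero_iff_of_sublist (l : List (Fin 3)) (hl : l <+ [0, 1, 2]) :
    IsMinRep cs {0} (π l) ↔ l ∉ [[0], [0, 2]] := by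
  rw [← List.mem_sublists] at hl
  simp [List.sublists] at hl
  rcases hl with rfl | rfl | rfl | rfl | rfl | rfl | rfl | rfl
  all_goals try
    refine iff_of_true (isMinRep_singleton_of_isReduced (isReduced_of_permOfWord cs ?_)) ?_ <;>
      decide
  · exact iff_of_false (not_isMinRep_singleton_of_mul_eq (l' := [])
      (isReduced_of_permOfWord cs (by decide)) (by simp) (by decide)) (by decide)
  · exact iff_of_false (not_isMinRep_singleton_of_mul_eq (l' := [2])
      (isReduced_of_permOfWord cs (by decide))
      (by simp [cs.wordProd_cons, mul_assoc, simple_mul_simple_comm_zero_two]) (by decide))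
      (by decide)

theorem isMinRep_one_iff_of_sublist (l : List (Fin 3)) (hl : l <+ [1, 0, 2]) :
    IsMinRep cs {1} (π l) ↔ l ∉ [[1]] := by
  rw [← List.mem_sublists] at hl
  simp [List.sublists] at hl
  rcases hl with rfl | rfl | rfl | rfl | rfl | rfl | rfl | rfl
  all_goals try
    refine iff_of_true (isMinRep_singleton_of_isReduced (isReduced_of_permOfWord cs ?_)) ?_ <;>
      decide
  exact iff_of_false (not_isMinRep_singleton_of_mul_eq (l' := [])
    (isReduced_of_permOfWord cs (by decide)) (by simp) (by decide)) (by decide)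

theorem paraKL_one_wordProd_012 {R P : W → W → ℤ[X]} (hR : IsParaRFamily cs {0} (-1) R)
    (hP : IsParaPFamily cs {0} R P) : P 1 (π [0, 1, 2]) = 1 := by
  have hB := isBooleanWord_of_mem cs (ω := [0, 1, 2]) (by decide)
  have hmr := isMinRep_zero_iff_of_sublist cs
  have htop : P (π [0, 1, 2]) (π [0, 1, 2]) = 1 :=
    hP.2.1 _ ((hmr _ (List.Sublist.refl _)).2 (by decide))
  have h01 : P (π [0, 1]) (π [0, 1, 2]) = 1 := by
    rw [hP.eq_C_boolean hR hB hmr (by decide) (by decide) (by decide) (by decide) (by decide)]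
    simp +decide [-CoxeterSystem.wordProd_singleton, boolPSum, quotSublists, List.sublists, boolR,
      htop]
  have h12 : P (π [1, 2]) (π [0, 1, 2]) = 1 := by
    rw [hP.eq_C_boolean hR hB hmr (by decide) (by decide) (by decide) (by decide) (by decide)]
    simp +decide [-CoxeterSystem.wordProd_singleton, boolPSum, quotSublists, List.sublists, boolR,
      htop]
  have h1 : P (π [1]) (π [0, 1, 2]) = 1 := by
    rw [hP.eq_C_boolean hR hB hmr (by decide) (by decide) (by decide) (by decide) (by decide)]
    simp +decide [-CoxeterSystem.wordProd_singleton, boolPSum, quotSublists, List.sublists, boolR,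
      htop, h01, h12]
  have h2 : P (π [2]) (π [0, 1, 2]) = 1 := by
    rw [hP.eq_C_boolean hR hB hmr (by decide) (by decide) (by decide) (by decide) (by decide)]
    simp +decide [-CoxeterSystem.wordProd_singleton, boolPSum, quotSublists, List.sublists, boolR,
      htop, h12]
  rw [← cs.wordProd_nil, hP.eq_C_add_C_mul_X_boolean hR hB hmr (by decide) (by decide)
    (by decide) (by decide) (by decide)]
  simp +decide [-CoxeterSystem.wordProd_singleton, boolPSum, quotSublists, List.sublists, boolR,
    htop, h01, h12, h1, h2]
  ring_nf
  simp [coeff_X, coeff_one, coeff_X_pow]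

theorem paraKL_one_wordProd_102 {R P : W → W → ℤ[X]} (hR : IsParaRFamily cs {1} (-1) R)
    (hP : IsParaPFamily cs {1} R P) : P 1 (π [1, 0, 2]) = 1 + X := by
  have hB := isBooleanWord_of_mem cs (ω := [1, 0, 2]) (by decide)
  have hmr := isMinRep_one_iff_of_sublist cs
  have htop : P (π [1, 0, 2]) (π [1, 0, 2]) = 1 :=
    hP.2.1 _ ((hmr _ (List.Sublist.refl _)).2 (by decide))
  have h10 : P (π [1, 0]) (π [1, 0, 2]) = 1 := by
    rw [hP.eq_C_boolean hR hB hmr (by decide) (by decide) (by decide) (by decide) (by decide)]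
    simp +decide [-CoxeterSystem.wordProd_singleton, boolPSum, quotSublists, List.sublists, boolR,
      htop]
  have h12 : P (π [1, 2]) (π [1, 0, 2]) = 1 := by
    rw [hP.eq_C_boolean hR hB hmr (by decide) (by decide) (by decide) (by decide) (by decide)]
    simp +decide [-CoxeterSystem.wordProd_singleton, boolPSum, quotSublists, List.sublists, boolR,
      htop]
  have h02 : P (π [0, 2]) (π [1, 0, 2]) = 1 := by
    rw [hP.eq_C_boolean hR hB hmr (by decide) (by decide) (by decide) (by decide) (by decide)]
    simp +decide [-CoxeterSystem.wordProd_singleton, boolPSum, quotSublists, List.sublists, boolR,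
      htop]
  have h0 : P (π [0]) (π [1, 0, 2]) = 1 := by
    rw [hP.eq_C_boolean hR hB hmr (by decide) (by decide) (by decide) (by decide) (by decide)]
    simp +decide [-CoxeterSystem.wordProd_singleton, boolPSum, quotSublists, List.sublists, boolR,
      htop, h10, h02]
  have h2 : P (π [2]) (π [1, 0, 2]) = 1 := by
    rw [hP.eq_C_boolean hR hB hmr (by decide) (by decide) (by decide) (by decide) (by decide)]
    simp +decide [-CoxeterSystem.wordProd_singleton, boolPSum, quotSublists, List.sublists, boolR,
      htop, h12, h02]
  rw [← cs.wordProd_nil, hP.eq_C_add_C_mul_X_boolean hR hB hmr (by decide) (by decide)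
    (by decide) (by decide) (by decide)]
  simp +decide [-CoxeterSystem.wordProd_singleton, boolPSum, quotSublists, List.sublists, boolR,
    htop, h10, h12, h02, h0, h2]
  ring_nf
  simp [coeff_X, coeff_one, coeff_X_pow]
  norm_num

end TypeA3

/-- in `S₄` (type `A₃`), with `v₁ = s₁s₂s₃`, `v₂ = s₂s₁s₃`,
`J₁ = {s₁}`, `J₂ = {s₂}`: both lower intervals are isomorphic to the Boolean
lattice `B₃`, both atom sets have 2 elements, but
`P^{J₁,-1}_{e,v₁} = 1 ≠ 1 + q = P^{J₂,-1}_{e,v₂}`. -/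
theorem s4_counterexample {W : Type*} [Group W]
    (cs : CoxeterSystem (CoxeterMatrix.Aₙ 3) W)
    (v₁ v₂ : W)
    (hv₁ : v₁ = cs.simple 0 * cs.simple 1 * cs.simple 2)
    (hv₂ : v₂ = cs.simple 1 * cs.simple 0 * cs.simple 2)
    (J₁ J₂ : Set (Fin 3)) (hJ₁ : J₁ = {0}) (hJ₂ : J₂ = {1})
    (Rp₁ Pp₁ Rp₂ Pp₂ : W → W → Polynomial ℤ)
    (hRp₁ : IsParaRFamily cs J₁ (-1) Rp₁)
    (hPp₁ : IsParaPFamily cs J₁ Rp₁ Pp₁)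
    (hRp₂ : IsParaRFamily cs J₂ (-1) Rp₂)
    (hPp₂ : IsParaPFamily cs J₂ Rp₂ Pp₂) :
    (∃ f : W → Set (Fin 3),
      Set.BijOn f (BruhatInterval cs 1 v₁) Set.univ ∧
      ∀ y ∈ BruhatInterval cs 1 v₁, ∀ y' ∈ BruhatInterval cs 1 v₁,
        (BruhatLE cs y y' ↔ f y ⊆ f y')) ∧
    (∃ f : W → Set (Fin 3),
      Set.BijOn f (BruhatInterval cs 1 v₂) Set.univ ∧
      ∀ y ∈ BruhatInterval cs 1 v₂, ∀ y' ∈ BruhatInterval cs 1 v₂,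
        (BruhatLE cs y y' ↔ f y ⊆ f y')) ∧
    (AtomSet cs J₁ 1 v₁).ncard = 2 ∧ (AtomSet cs J₂ 1 v₂).ncard = 2 ∧
    Pp₁ 1 v₁ = 1 ∧ Pp₂ 1 v₂ = 1 + X := by
  subst hv₁ hv₂ hJ₁ hJ₂
  have hv₁ : cs.simple 0 * cs.simple 1 * cs.simple 2 = cs.wordProd [0, 1, 2] := by
    simp [cs.wordProd_cons, mul_assoc]
  have hv₂ : cs.simple 1 * cs.simple 0 * cs.simple 2 = cs.wordProd [1, 0, 2] := by
    simp [cs.wordProd_cons, mul_assoc]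
  have hB₁ := TypeA3.isBooleanWord_of_mem cs (ω := [0, 1, 2]) (by decide)
  have hB₂ := TypeA3.isBooleanWord_of_mem cs (ω := [1, 0, 2]) (by decide)
  have hall : ∀ i : Fin 3, i ∈ [0, 1, 2] ∧ i ∈ [1, 0, 2] := by decide
  rw [hv₁, hv₂]
  refine ⟨hB₁.exists_orderIso_boolean fun i => (hall i).1,
    hB₂.exists_orderIso_boolean fun i => (hall i).2, ?_, ?_,
    TypeA3.paraKL_one_wordProd_012 cs hRp₁ hPp₁,
    TypeA3.paraKL_one_wordProd_102 cs hRp₂ hPp₂⟩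
  · exact (ncard_atomSet_one_singleton (TypeA3.simple_injective cs)
      (fun i => (hB₁.simple_bruhatLE_iff (List.Sublist.refl _)).2 (hall i).1) 0).trans (by simp)
  · exact (ncard_atomSet_one_singleton (TypeA3.simple_injective cs)
      (fun i => (hB₂.simple_bruhatLE_iff (List.Sublist.refl _)).2 (hall i).2) 1).trans (by simp)

end KL
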